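/- In dimension 1, under Hypotheses 1–3: let u = T⁻[v] with v 1-periodic semiconcave, and Σ₊[u] the (single-valued, continuous, non-decreasing, degree-one) optimal forward map. For every y ∈ ℝ, the preimage (Σ₊[u])⁻¹(y) is either a singleton or a non-degenerate compact interval; if it is a singleton {x}, then x minimizes v(·) + S(·,y); if it is [x₋, x₊] with x₋ < x₊, then both x₋ and x₊ minimize v(·) + S(·,y). -/

import Mathlib

open Filter Topology

/-- The discrete backward Lax-Oleinik operator (dimension 1). -/
noncomputable def Tminus (S : ℝ → ℝ → ℝ) (u : ℝ → ℝ) : ℝ → ℝ :=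
  fun y => ⨅ x, (u x + S x y)

/-- The discrete forward Lax-Oleinik operator (dimension 1). -/
noncomputable def Tplus (S : ℝ → ℝ → ℝ) (u : ℝ → ℝ) : ℝ → ℝ :=
  fun x => ⨆ y, (u y - S x y)

/-- 1-periodicity. -/
def Periodic1 (u : ℝ → ℝ) : Prop := ∀ x, u (x + 1) = u x

/-- Coercivity: S(x,y) → +∞ as |x−y| → ∞. -/
def Coercive1 (S : ℝ → ℝ → ℝ) : Prop :=
  ∀ M : ℝ, ∃ R : ℝ, ∀ x y : ℝ, R ≤ |x - y| → M ≤ S x y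

/-- Diagonal periodicity: S(x+m, y+m) = S(x,y) for m ∈ ℤ. -/
def DiagPeriodic1 (S : ℝ → ℝ → ℝ) : Prop :=
  ∀ (m : ℤ) (x y : ℝ), S (x + m) (y + m) = S x y

/-- Semiconcavity with a linear modulus (dimension 1). -/
def Semiconcave1 (v : ℝ → ℝ) : Prop :=
  ∃ C : ℝ, 0 ≤ C ∧ ∀ x y θ : ℝ, θ ∈ Set.Icc (0:ℝ) 1 →
    θ * v x + (1 - θ) * v y - v (θ * x + (1 - θ) * y) ≤
      C / 2 * θ * (1 - θ) * |x - y| ^ 2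

/-- Local semiconcavity (with linear modulus) on a normed space. -/
def LocallySemiconcave {E : Type*} [NormedAddCommGroup E] [NormedSpace ℝ E]
    (f : E → ℝ) : Prop :=
  ∀ x : E, ∃ U ∈ 𝓝 x, Convex ℝ U ∧ ∃ C : ℝ, 0 ≤ C ∧
    ∀ y ∈ U, ∀ z ∈ U, ∀ θ : ℝ, θ ∈ Set.Icc (0:ℝ) 1 →
      θ * f y + (1 - θ) * f z - f (θ • y + (1 - θ) • z) ≤
        C / 2 * θ * (1 - θ) * ‖y - z‖ ^ 2

/-- The ferromagnetic property in dimension 1: S is C¹ and the maps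
`y ↦ ∂₁S(x,y)` and `x ↦ ∂₂S(x,y)` are homeomorphisms of ℝ. -/
def Ferromagnetic1 (S : ℝ → ℝ → ℝ) : Prop :=
  ContDiff ℝ 1 (fun p : ℝ × ℝ => S p.1 p.2) ∧
  (∀ x : ℝ, ∃ h : ℝ ≃ₜ ℝ, ∀ y, h y = deriv (fun t => S t y) x) ∧
  (∀ y : ℝ, ∃ h : ℝ ≃ₜ ℝ, ∀ x, h x = deriv (fun t => S x t) y)

/-- The Aubry–Le Daeron non-crossing condition. -/
def NonCrossing (S : ℝ → ℝ → ℝ) : Prop :=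
  ∀ x₁ x₂ y₁ y₂ : ℝ, (x₁ - x₂) * (y₁ - y₂) < 0 →
    S x₁ y₂ + S x₂ y₁ < S x₁ y₁ + S x₂ y₂

/-!
Coercivity gives a minimizer of `v(·) + S(·, w)` for every `w`, and any such minimizer is sent
to `w` by `σ`; so `σ` is onto and, being monotone, continuous and of degree one, has nonempty
compact intervals `[a, b]` as fibers. For `w ↑ y` the minimizers for `w` lie in `[a - 1, a)`;
a limit point of them minimizes `v(·) + S(·, y)`, hence lies in the fiber, hence is `a`.
Symmetrically for `b`.
-/

open Set

/-- The set `Σ₋[v](y)` of minimizers of `v(·) + S(·, y)`. -/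
def argminSet (v : ℝ → ℝ) (S : ℝ → ℝ → ℝ) (y : ℝ) : Set ℝ :=
  {x | ∀ z, v x + S x y ≤ v z + S z y}

variable {S : ℝ → ℝ → ℝ} {v σ : ℝ → ℝ}

theorem Semiconcave1.continuous (hv : Semiconcave1 v) : Continuous v := by
  obtain ⟨C, -, hC⟩ := hv
  have hconc : ConcaveOn ℝ univ fun x => v x - C / 2 * x ^ 2 := by
    refine ⟨convex_univ, fun x _ y _ a b ha hb hab => ?_⟩
    obtain rfl : b = 1 - a := by linarith
    have h := hC x y a ⟨ha, by linarith⟩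
    rw [sq_abs] at h
    simp only [smul_eq_mul]
    nlinarith
  have h : Continuous fun x => (v x - C / 2 * x ^ 2) + C / 2 * x ^ 2 :=
    (continuousOn_univ.mp (hconc.continuousOn isOpen_univ)).add (by fun_prop)
  simpa using h

theorem Periodic1.bddBelow_range (hvp : Periodic1 v) (hvc : Continuous v) :
    BddBelow (range v) :=
  (Function.Periodic.compact_of_continuous hvp one_ne_zero hvc).bddBelow

theorem Coercive1.tendsto_cocompact (hco : Coercive1 S) (y : ℝ) :
    Tendsto (fun x => S x y) (cocompact ℝ) atTop := by
  refine tendsto_atTop.2 fun M => ?_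
  obtain ⟨R, hR⟩ := hco M
  filter_upwards [(isCompact_closedBall y R).compl_mem_cocompact] with x hx
  have hxy : R < |x - y| := by simpa [Real.dist_eq] using hx
  exact hR x y hxy.le

theorem argminSet_nonempty (hS : Continuous fun p : ℝ × ℝ => S p.1 p.2) (hco : Coercive1 S)
    (hvc : Continuous v) (hvb : BddBelow (range v)) (y : ℝ) : (argminSet v S y).Nonempty := by
  obtain ⟨C, hC⟩ := hvb
  exact (hvc.add (hS.comp (continuous_id.prodMk continuous_const))).exists_forall_le
    (tendsto_atTop_add_left_of_le _ C (fun x => hC (mem_range_self x)) (hco.tendsto_cocompact y))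

theorem isClosed_setOf_mem_argminSet (hS : Continuous fun p : ℝ × ℝ => S p.1 p.2)
    (hvc : Continuous v) : IsClosed {p : ℝ × ℝ | p.1 ∈ argminSet v S p.2} := by
  have h : {p : ℝ × ℝ | p.1 ∈ argminSet v S p.2} =
      ⋂ z, {p | v p.1 + S p.1 p.2 ≤ v z + S z p.2} := by
    ext
    simp [argminSet]
  rw [h]
  exact isClosed_iInter fun z => isClosed_le ((hvc.comp continuous_fst).add hS)
    (continuous_const.add (hS.comp (continuous_const.prodMk continuous_snd)))

theorem exists_mem_argminSet_of_mem_closure (hS : Continuous fun p : ℝ × ℝ => S p.1 p.2)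
    (hvc : Continuous v) {K A : Set ℝ} (hK : IsCompact K) (hA : Bornology.IsBounded A)
    (hKA : ∀ w ∈ A, ∃ x ∈ K, x ∈ argminSet v S w) {y : ℝ} (hy : y ∈ closure A) :
    ∃ x ∈ K, x ∈ argminSet v S y := by
  set P := Prod.snd '' ((K ×ˢ closure A) ∩ {p : ℝ × ℝ | p.1 ∈ argminSet v S p.2})
  have hP : IsCompact P :=
    ((hK.prod hA.isCompact_closure).inter_right (isClosed_setOf_mem_argminSet hS hvc)).image
      continuous_snd
  have hAP : A ⊆ P := by
    intro w hw
    obtain ⟨x, hxK, hx⟩ := hKA w hw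
    exact ⟨(x, w), ⟨⟨hxK, subset_closure hw⟩, hx⟩, rfl⟩
  obtain ⟨⟨x, _⟩, ⟨⟨hxK, -⟩, hx⟩, rfl⟩ := (hP.isClosed.closure_subset_iff.2 hAP) hy
  exact ⟨x, hxK, hx⟩

theorem Tminus_eq_of_mem_argminSet {x y : ℝ} (hx : x ∈ argminSet v S y) :
    Tminus S v y = v x + S x y :=
  le_antisymm (ciInf_le ⟨_, by rintro _ ⟨z, rfl⟩; exact hx z⟩ x) (le_ciInf hx)

theorem forward_eq_of_mem_argminSet {u : ℝ → ℝ} (hu : u = Tminus S v)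
    (hσuniq : ∀ x y, (∀ z, u z - S x z ≤ u y - S x y) → y = σ x)
    (hne : ∀ w, (argminSet v S w).Nonempty) {x y : ℝ} (hx : x ∈ argminSet v S y) :
    σ x = y := by
  subst hu
  refine (hσuniq x y fun z => ?_).symm
  obtain ⟨m, hm⟩ := hne z
  have := hm x
  rw [Tminus_eq_of_mem_argminSet hx, Tminus_eq_of_mem_argminSet hm]
  linarith

theorem apply_sub_one_of_apply_add_one (hσdeg : ∀ x, σ (x + 1) = σ x + 1) (x : ℝ) :
    σ (x - 1) = σ x - 1 :=
  eq_sub_of_add_eq (by rw [← hσdeg, sub_add_cancel])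

theorem exists_preimage_singleton_eq_Icc (hσcont : Continuous σ) (hσmono : Monotone σ)
    (hσdeg : ∀ x, σ (x + 1) = σ x + 1) {x y : ℝ} (hx : σ x = y) :
    ∃ a b, a ≤ b ∧ σ ⁻¹' {y} = Icc a b := by
  have hbdd : σ ⁻¹' {y} ⊆ Icc (x - 1) (x + 1) := by
    intro z (hz : σ z = y)
    have h₁ : σ (x - 1) < σ z := by
      linarith [apply_sub_one_of_apply_add_one hσdeg x]
    have h₂ : σ z < σ (x + 1) := by linarith [hσdeg x]
    exact ⟨(hσmono.reflect_lt h₁).le, (hσmono.reflect_lt h₂).le⟩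
  have hcpt : IsCompact (σ ⁻¹' {y}) :=
    isCompact_Icc.of_isClosed_subset (isClosed_singleton.preimage hσcont) hbdd
  have hconn : IsConnected (σ ⁻¹' {y}) :=
    ⟨⟨x, hx⟩, (ordConnected_singleton.preimage_mono hσmono).isPreconnected⟩
  have hIcc := eq_Icc_of_connected_compact hconn hcpt
  exact ⟨_, _, nonempty_Icc.mp (hIcc ▸ hconn.nonempty), hIcc⟩

/-- The minimizers for `w ↑ y` accumulate at the left end of `σ⁻¹{y}`. -/
theorem left_mem_argminSet_of_preimage_eq_Icc (hS : Continuous fun p : ℝ × ℝ => S p.1 p.2)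
    (hvc : Continuous v) (hσmono : Monotone σ) (hσdeg : ∀ x, σ (x + 1) = σ x + 1)
    (hne : ∀ w, (argminSet v S w).Nonempty) (hσ : ∀ x w, x ∈ argminSet v S w → σ x = w)
    {a b y : ℝ} (hab : a ≤ b) (hF : σ ⁻¹' {y} = Icc a b) :
    a ∈ argminSet v S y := by
  have hσa : σ a = y := hF.symm.subset (left_mem_Icc.2 hab)
  have hloc : ∀ w ∈ Ioo (y - 1) y, ∃ x ∈ Icc (a - 1) a, x ∈ argminSet v S w := by
    rintro w ⟨hw₁, hw₂⟩
    obtain ⟨x, hx⟩ := hne w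
    have hσx := hσ x w hx
    have h₁ : σ (a - 1) < σ x := by
      linarith [apply_sub_one_of_apply_add_one hσdeg a]
    have h₂ : σ x < σ a := by linarith
    exact ⟨x, ⟨(hσmono.reflect_lt h₁).le, (hσmono.reflect_lt h₂).le⟩, hx⟩
  obtain ⟨l, hl, hlmin⟩ := exists_mem_argminSet_of_mem_closure hS hvc isCompact_Icc
    (Metric.isBounded_Ioo _ _) hloc
    (by rw [closure_Ioo (by linarith)]; exact right_mem_Icc.2 (by linarith))
  have hlF : l ∈ Icc a b := hF ▸ hσ l y hlmin
  rwa [← le_antisymm hl.2 hlF.1]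

/-- The minimizers for `w ↓ y` accumulate at the right end of `σ⁻¹{y}`. -/
theorem right_mem_argminSet_of_preimage_eq_Icc (hS : Continuous fun p : ℝ × ℝ => S p.1 p.2)
    (hvc : Continuous v) (hσmono : Monotone σ) (hσdeg : ∀ x, σ (x + 1) = σ x + 1)
    (hne : ∀ w, (argminSet v S w).Nonempty) (hσ : ∀ x w, x ∈ argminSet v S w → σ x = w)
    {a b y : ℝ} (hab : a ≤ b) (hF : σ ⁻¹' {y} = Icc a b) :
    b ∈ argminSet v S y := by
  have hσb : σ b = y := hF.symm.subset (right_mem_Icc.2 hab)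
  have hloc : ∀ w ∈ Ioo y (y + 1), ∃ x ∈ Icc b (b + 1), x ∈ argminSet v S w := by
    rintro w ⟨hw₁, hw₂⟩
    obtain ⟨x, hx⟩ := hne w
    have hσx := hσ x w hx
    have h₁ : σ b < σ x := by linarith
    have h₂ : σ x < σ (b + 1) := by linarith [hσdeg b]
    exact ⟨x, ⟨(hσmono.reflect_lt h₁).le, (hσmono.reflect_lt h₂).le⟩, hx⟩
  obtain ⟨l, hl, hlmin⟩ := exists_mem_argminSet_of_mem_closure hS hvc isCompact_Icc
    (Metric.isBounded_Ioo _ _) hloc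
    (by rw [closure_Ioo (by linarith)]; exact left_mem_Icc.2 (by linarith))
  have hlF : l ∈ Icc a b := hF ▸ hσ l y hlmin
  rwa [← le_antisymm hlF.2 hl.1]

theorem fibers_of_forward_map_general (S : ℝ → ℝ → ℝ)
    (hS : Continuous fun p : ℝ × ℝ => S p.1 p.2)
    (hco : Coercive1 S)
    (v u σ : ℝ → ℝ) (hvp : Periodic1 v) (hv : Semiconcave1 v)
    (hu : u = Tminus S v)
    (hσuniq : ∀ x y, (∀ z, u z - S x z ≤ u y - S x y) → y = σ x)
    (hσcont : Continuous σ) (hσmono : Monotone σ)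
    (hσdeg : ∀ x, σ (x + 1) = σ x + 1) :
    ∀ y : ℝ,
      (∃ x : ℝ, σ ⁻¹' {y} = {x} ∧ ∀ z, v x + S x y ≤ v z + S z y) ∨
      (∃ a b : ℝ, a < b ∧ σ ⁻¹' {y} = Set.Icc a b ∧
        (∀ z, v a + S a y ≤ v z + S z y) ∧ (∀ z, v b + S b y ≤ v z + S z y)) := by
  intro y
  have hvc := hv.continuous
  have hne : ∀ w, (argminSet v S w).Nonempty :=
    argminSet_nonempty hS hco hvc (hvp.bddBelow_range hvc)
  have hσ : ∀ x w, x ∈ argminSet v S w → σ x = w := fun _ _ =>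
    forward_eq_of_mem_argminSet hu hσuniq hne
  obtain ⟨x₀, hx₀⟩ := hne y
  obtain ⟨a, b, hab, hF⟩ :=
    exists_preimage_singleton_eq_Icc hσcont hσmono hσdeg (hσ _ _ hx₀)
  have ha := left_mem_argminSet_of_preimage_eq_Icc hS hvc hσmono hσdeg hne hσ hab hF
  rcases hab.eq_or_lt with rfl | hlt
  · exact Or.inl ⟨a, by rw [hF, Icc_self], ha⟩
  · exact Or.inr ⟨a, b, hlt, hF, ha,
      right_mem_argminSet_of_preimage_eq_Icc hS hvc hσmono hσdeg hne hσ hlt.le hF⟩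

/-- Fibers of the optimal forward map are singletons or non-degenerate compact
intervals, with endpoints minimizing v(·) + S(·,y). -/
theorem fibers_of_forward_map (S : ℝ → ℝ → ℝ)
    (hS : Continuous fun p : ℝ × ℝ => S p.1 p.2)
    (hco : Coercive1 S) (hdp : DiagPeriodic1 S)
    (hlsc : LocallySemiconcave fun p : ℝ × ℝ => S p.1 p.2)
    (hfer : Ferromagnetic1 S) (hnc : NonCrossing S)
    (v u σ : ℝ → ℝ) (hvp : Periodic1 v) (hv : Semiconcave1 v)
    (hu : u = Tminus S v)
    (hσmax : ∀ x z, u z - S x z ≤ u (σ x) - S x (σ x))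
    (hσuniq : ∀ x y, (∀ z, u z - S x z ≤ u y - S x y) → y = σ x)
    (hσcont : Continuous σ) (hσmono : Monotone σ)
    (hσdeg : ∀ x, σ (x + 1) = σ x + 1) :
    ∀ y : ℝ,
      (∃ x : ℝ, σ ⁻¹' {y} = {x} ∧ ∀ z, v x + S x y ≤ v z + S z y) ∨
      (∃ a b : ℝ, a < b ∧ σ ⁻¹' {y} = Set.Icc a b ∧
        (∀ z, v a + S a y ≤ v z + S z y) ∧ (∀ z, v b + S b y ≤ v z + S z y)) :=
  fibers_of_forward_map_general S hS hco v u σ hvp hv hu hσuniq hσcont hσmono hσdeg
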